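/- Let F be a field of characteristic different from 2 and n ≥ 2. Let Q(n)^(+) denote the subspace of M_{2n}(F) consisting of matrices of the block form [[A, B], [B, A]] with A, B ∈ M_n(F), graded with even part the matrices [[A,0],[0,A]] and odd part the matrices [[0,B],[B,0]], and equipped with the super-symmetrized product: for x = x₀ + x₁ and y = y₀ + y₁ decomposed into even and odd parts, x∘y is bilinear with x₀∘y₀ = (1/2)(x₀y₀ + y₀x₀), x₀∘y₁ = (1/2)(x₀y₁ + y₁x₀), x₁∘y₀ = (1/2)(x₁y₀ + y₀x₁), and x₁∘y₁ = (1/2)(x₁y₁ − y₁x₁). Then every 1/2-derivation φ of Q(n)^(+) is of the form φ(x) = α·x for some α ∈ F. -/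

import Mathlib

/-- The even (block-diagonal) part of a matrix indexed by `α ⊕ β`. -/
def blockDiagPart {F : Type*} [Field F] {α β : Type*}
    (x : Matrix (α ⊕ β) (α ⊕ β) F) : Matrix (α ⊕ β) (α ⊕ β) F :=
  Matrix.of fun i j => if i.isLeft = j.isLeft then x i j else 0

/-- The super-symmetrized product `∘` on block matrices: writing
`x = x₀ + x₁` with `x₀` the block-diagonal (even) part and `x₁` the
block-off-diagonal (odd) part, `x ∘ y` is bilinear with
`x₀∘y₀ = (1/2)(x₀y₀ + y₀x₀)`, `x₀∘y₁ = (1/2)(x₀y₁ + y₁x₀)`,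
`x₁∘y₀ = (1/2)(x₁y₀ + y₀x₁)` and `x₁∘y₁ = (1/2)(x₁y₁ − y₁x₁)`. -/
def superMul {F : Type*} [Field F] {α β : Type*} [Fintype α] [Fintype β]
    (x y : Matrix (α ⊕ β) (α ⊕ β) F) : Matrix (α ⊕ β) (α ⊕ β) F :=
  (1 / 2 : F) •
    (blockDiagPart x * blockDiagPart y + blockDiagPart y * blockDiagPart x
      + blockDiagPart x * (y - blockDiagPart y) + (y - blockDiagPart y) * blockDiagPart x
      + (x - blockDiagPart x) * blockDiagPart y + blockDiagPart y * (x - blockDiagPart x)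
      + (x - blockDiagPart x) * (y - blockDiagPart y)
      - (y - blockDiagPart y) * (x - blockDiagPart x))

/-- The subspace `Q(n)` of `M_{2n}(F)`: block matrices `[[A, B], [B, A]]`. -/
def QnSub (F : Type*) [Field F] (n : ℕ) :
    Submodule F (Matrix (Fin n ⊕ Fin n) (Fin n ⊕ Fin n) F) where
  carrier := {x | (∀ i j : Fin n, x (Sum.inl i) (Sum.inl j) = x (Sum.inr i) (Sum.inr j))
    ∧ ∀ i j : Fin n, x (Sum.inl i) (Sum.inr j) = x (Sum.inr i) (Sum.inl j)}
  add_mem' := by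
    rintro a b ⟨ha1, ha2⟩ ⟨hb1, hb2⟩
    exact ⟨fun i j => by simp [Matrix.add_apply, ha1 i j, hb1 i j],
      fun i j => by simp [Matrix.add_apply, ha2 i j, hb2 i j]⟩
  zero_mem' := ⟨fun i j => rfl, fun i j => rfl⟩
  smul_mem' := by
    rintro c x ⟨h1, h2⟩
    exact ⟨fun i j => by simp [Matrix.smul_apply, h1 i j],
      fun i j => by simp [Matrix.smul_apply, h2 i j]⟩

/-!
Put `d = φ 1` and write `d = [[A, B], [B, A]]`. Since `1` is a two-sided unit for `∘`, the
derivation rule applied to `1 ∘ x` and `x ∘ 1` gives `φ x = d ∘ x = x ∘ d`. Comparing `d ∘ y`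
with `y ∘ d` for odd `y = [[0, C], [C, 0]]` gives `[B, C] = -[B, C]`, so `B = β` is central.
The rule for `x ∘ x` with `x = [[X, 0], [0, X]]` even reads `[X, [X, A]] = 0` on the even part,
which forces `A = α` to be scalar. Finally, for odd `x, y` the odd part of the rule reads
`β [X, Y] = 0`, and `n ≥ 2` provides a pair with `[X, Y] ≠ 0`; hence `φ = α • id`.
-/

open Matrix

section Blocks

variable {ι R : Type*}

def qBlock (A B : Matrix ι ι R) : Matrix (ι ⊕ ι) (ι ⊕ ι) R := fromBlocks A B B A

theorem qBlock_inj {A B C D : Matrix ι ι R} : qBlock A B = qBlock C D ↔ A = C ∧ B = D := by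
  simp only [qBlock, fromBlocks_inj]
  tauto

theorem qBlock_add [Add R] (A B C D : Matrix ι ι R) :
    qBlock A B + qBlock C D = qBlock (A + C) (B + D) :=
  fromBlocks_add ..

theorem qBlock_sub [Sub R] (A B C D : Matrix ι ι R) :
    qBlock A B - qBlock C D = qBlock (A - C) (B - D) := by
  ext (i | i) (j | j) <;> rfl

theorem smul_qBlock {S : Type*} [SMul S R] (c : S) (A B : Matrix ι ι R) :
    c • qBlock A B = qBlock (c • A) (c • B) :=
  fromBlocks_smul ..

theorem qBlock_mul [Fintype ι] [NonUnitalNonAssocSemiring R] (A B C D : Matrix ι ι R) :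
    qBlock A B * qBlock C D = qBlock (A * C + B * D) (A * D + B * C) := by
  rw [qBlock, qBlock, fromBlocks_multiply, add_comm (B * C), add_comm (B * D)]
  rfl

theorem qBlock_one [DecidableEq ι] [Zero R] [One R] : qBlock (1 : Matrix ι ι R) 0 = 1 :=
  fromBlocks_one

end Blocks

section SuperMul

variable {F ι : Type*} [Field F]

theorem blockDiagPart_qBlock (A B : Matrix ι ι F) :
    blockDiagPart (qBlock A B) = qBlock A 0 := by
  ext (i | i) (j | j) <;> simp [blockDiagPart, qBlock]

variable [Fintype ι]

theorem superMul_qBlock (A B C D : Matrix ι ι F) :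
    superMul (qBlock A B) (qBlock C D) =
      qBlock ((1 / 2 : F) • (A * C + C * A + (B * D - D * B)))
        ((1 / 2 : F) • (A * D + D * A + (B * C + C * B))) := by
  simp only [superMul, blockDiagPart_qBlock, qBlock_sub, qBlock_mul, qBlock_add, smul_qBlock,
    qBlock_inj]
  constructor <;> congr 1 <;> noncomm_ring

theorem qBlock_smul_one_superMul [DecidableEq ι] (h2 : (2 : F) ≠ 0) (α β : F)
    (C D : Matrix ι ι F) :
    superMul (qBlock (α • 1) (β • 1)) (qBlock C D) = qBlock (α • C) (α • D + β • C) := by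
  rw [superMul_qBlock, qBlock_inj]
  simp only [smul_mul_assoc, mul_smul_comm, one_mul, mul_one, sub_self, add_zero]
  constructor <;> match_scalars <;> field_simp <;> ring

end SuperMul

theorem eq_of_eq_half_smul_add {F V : Type*} [Field F] [AddCommGroup V] [Module F V]
    (h2 : (2 : F) ≠ 0) {v w : V} (h : v = (1 / 2 : F) • (v + w)) : v = w := by
  have htwo : (2 : F) • v = v + w := by
    conv_lhs => rw [h]
    rw [smul_smul, mul_one_div_cancel h2, one_smul]
  rw [two_smul] at htwo
  exact add_left_cancel htwo

namespace Matrix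

variable {F ι : Type*} [Field F] [Fintype ι] [DecidableEq ι]

theorem mem_range_scalar_of_forall_lie_lie_eq_zero (h2 : (2 : F) ≠ 0) {A : Matrix ι ι F}
    (h : ∀ X : Matrix ι ι F, ⁅X, ⁅X, A⁆⁆ = 0) : A ∈ Set.range (scalar ι) := by
  have hoff : ∀ i j, i ≠ j → A i j = 0 := fun i j hij => by
    simpa [Ring.lie_def, mul_sub, sub_mul, mul_assoc, hij] using congrFun₂ (h (single j j 1)) i j
  have hdiag : ∀ i j, A i i = A j j := by
    intro i j
    rcases eq_or_ne i j with rfl | hij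
    · rfl
    have hii : A i i - A j j - (A j j - A i i) = 0 := by
      have := congrFun₂ (h (single i j 1 + single j i 1)) i i
      simpa [Ring.lie_def, mul_sub, sub_mul, mul_add, add_mul, mul_assoc, hij, hij.symm] using this
    have h2d : (2 : F) * (A i i - A j j) = 0 := by linear_combination hii
    exact sub_eq_zero.mp ((mul_eq_zero.mp h2d).resolve_left h2)
  cases isEmpty_or_nonempty ι
  · exact ⟨0, Subsingleton.elim _ _⟩
  obtain ⟨i⟩ := ‹Nonempty ι›
  refine ⟨A i i, ext fun j k => ?_⟩
  rcases eq_or_ne j k with rfl | hjk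
  · simp [hdiag i j]
  · simp [hoff j k hjk, hjk]

theorem eq_zero_of_forall_smul_lie_eq_zero [Nontrivial ι] {β : F}
    (h : ∀ X Y : Matrix ι ι F, β • ⁅X, Y⁆ = 0) : β = 0 := by
  obtain ⟨i, j, hij⟩ := exists_pair_ne ι
  simpa [Ring.lie_def, single_apply, hij, hij.symm] using
    congrFun₂ (h (single i j 1) (single j i 1)) i i

end Matrix

namespace QnSub

variable {F : Type*} [Field F] {n : ℕ}

theorem qBlock_mem (A B : Matrix (Fin n) (Fin n) F) : qBlock A B ∈ QnSub F n :=
  ⟨fun _ _ => rfl, fun _ _ => rfl⟩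

theorem exists_eq_qBlock {x : Matrix (Fin n ⊕ Fin n) (Fin n ⊕ Fin n) F} (hx : x ∈ QnSub F n) :
    ∃ A B, x = qBlock A B := by
  obtain ⟨h₁, h₂⟩ := hx
  refine ⟨x.toBlocks₁₁, x.toBlocks₁₂, ?_⟩
  ext (i | i) (j | j)
  exacts [rfl, rfl, (h₂ i j).symm, (h₁ i j).symm]

theorem one_mem : (1 : Matrix (Fin n ⊕ Fin n) (Fin n ⊕ Fin n) F) ∈ QnSub F n := by
  rw [← qBlock_one]
  exact qBlock_mem 1 0

theorem superMul_mem {x y : Matrix (Fin n ⊕ Fin n) (Fin n ⊕ Fin n) F} (hx : x ∈ QnSub F n)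
    (hy : y ∈ QnSub F n) : superMul x y ∈ QnSub F n := by
  obtain ⟨A, B, rfl⟩ := exists_eq_qBlock hx
  obtain ⟨C, D, rfl⟩ := exists_eq_qBlock hy
  rw [superMul_qBlock]
  exact qBlock_mem _ _

theorem superMul_one (h2 : (2 : F) ≠ 0) {x : Matrix (Fin n ⊕ Fin n) (Fin n ⊕ Fin n) F}
    (hx : x ∈ QnSub F n) : superMul x 1 = x := by
  obtain ⟨A, B, rfl⟩ := exists_eq_qBlock hx
  rw [← qBlock_one, superMul_qBlock, qBlock_inj]
  simp only [mul_one, one_mul, mul_zero, zero_mul, sub_zero, zero_add, add_zero]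
  constructor <;> match_scalars <;> field_simp <;> ring

theorem one_superMul (h2 : (2 : F) ≠ 0) {x : Matrix (Fin n ⊕ Fin n) (Fin n ⊕ Fin n) F}
    (hx : x ∈ QnSub F n) : superMul 1 x = x := by
  obtain ⟨A, B, rfl⟩ := exists_eq_qBlock hx
  rw [← qBlock_one, superMul_qBlock, qBlock_inj]
  simp only [mul_one, one_mul, mul_zero, zero_mul, add_zero, sub_self]
  constructor <;> match_scalars <;> field_simp <;> ring

def IsHalfDerivation (φ : QnSub F n →ₗ[F] QnSub F n) : Prop :=
  ∀ x y z : QnSub F n, (z : Matrix (Fin n ⊕ Fin n) (Fin n ⊕ Fin n) F) = superMul x y →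
    (φ z : Matrix (Fin n ⊕ Fin n) (Fin n ⊕ Fin n) F) =
      (1 / 2 : F) • (superMul (φ x) y + superMul x (φ y))

namespace IsHalfDerivation

variable {φ : QnSub F n →ₗ[F] QnSub F n}

theorem coe_apply_eq_superMul_left (h2 : (2 : F) ≠ 0) (hφ : IsHalfDerivation φ)
    (x : QnSub F n) :
    (φ x : Matrix (Fin n ⊕ Fin n) (Fin n ⊕ Fin n) F) = superMul (φ ⟨1, one_mem⟩) x := by
  have h := hφ ⟨1, one_mem⟩ x x (one_superMul h2 x.2).symm
  rw [one_superMul h2 (φ x).2, add_comm] at h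
  exact eq_of_eq_half_smul_add h2 h

theorem coe_apply_eq_superMul_right (h2 : (2 : F) ≠ 0) (hφ : IsHalfDerivation φ)
    (x : QnSub F n) :
    (φ x : Matrix (Fin n ⊕ Fin n) (Fin n ⊕ Fin n) F) = superMul x (φ ⟨1, one_mem⟩) := by
  have h := hφ x ⟨1, one_mem⟩ x (superMul_one h2 x.2).symm
  rw [superMul_one h2 (φ x).2] at h
  exact eq_of_eq_half_smul_add h2 h

variable {A B : Matrix (Fin n) (Fin n) F}

theorem odd_mem_range_scalar (h2 : (2 : F) ≠ 0) (hφ : IsHalfDerivation φ)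
    (hd : (φ ⟨1, one_mem⟩ : Matrix (Fin n ⊕ Fin n) (Fin n ⊕ Fin n) F) = qBlock A B) :
    B ∈ Set.range (scalar (Fin n)) := by
  refine mem_range_scalar_of_commute_single fun i j _ => (?_ : Commute B _).symm
  set C : Matrix (Fin n) (Fin n) F := single i j 1
  have h := (hφ.coe_apply_eq_superMul_left h2 ⟨qBlock 0 C, qBlock_mem 0 C⟩).symm.trans
    (hφ.coe_apply_eq_superMul_right h2 _)
  rw [hd, superMul_qBlock, superMul_qBlock, qBlock_inj] at h
  have hanti := smul_right_injective _ (one_div_ne_zero h2) h.1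
  simp only [mul_zero, zero_mul, add_zero, zero_add] at hanti
  have htwo : (2 : F) • (B * C - C * B) = 0 := by linear_combination (norm := module) hanti
  exact sub_eq_zero.mp ((smul_eq_zero.mp htwo).resolve_left h2)

theorem even_mem_range_scalar (h2 : (2 : F) ≠ 0) (hφ : IsHalfDerivation φ)
    (hd : (φ ⟨1, one_mem⟩ : Matrix (Fin n ⊕ Fin n) (Fin n ⊕ Fin n) F) = qBlock A B) :
    A ∈ Set.range (scalar (Fin n)) := by
  refine mem_range_scalar_of_forall_lie_lie_eq_zero h2 fun X => ?_
  let x : QnSub F n := ⟨qBlock X 0, qBlock_mem X 0⟩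
  have h := hφ x x ⟨_, superMul_mem x.2 x.2⟩ rfl
  rw [hφ.coe_apply_eq_superMul_left h2 ⟨_, _⟩, hφ.coe_apply_eq_superMul_left h2 x, hd] at h
  simp only [x, superMul_qBlock, qBlock_add, smul_qBlock, qBlock_inj] at h
  have heven := h.1
  simp only [mul_zero, zero_mul, add_zero, zero_add, sub_zero, mul_add, add_mul, mul_smul_comm,
    smul_mul_assoc, mul_assoc, smul_add] at heven
  rw [Ring.lie_def, Ring.lie_def]
  simp only [mul_sub, sub_mul, mul_assoc]
  linear_combination (norm := match_scalars <;> field_simp <;> ring) (4 : F) • heven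

theorem smul_lie_eq_zero (h2 : (2 : F) ≠ 0) (hφ : IsHalfDerivation φ) {α β : F}
    (hd : (φ ⟨1, one_mem⟩ : Matrix (Fin n ⊕ Fin n) (Fin n ⊕ Fin n) F) =
      qBlock (α • 1) (β • 1))
    (X Y : Matrix (Fin n) (Fin n) F) : β • ⁅X, Y⁆ = 0 := by
  let x : QnSub F n := ⟨qBlock 0 X, qBlock_mem 0 X⟩
  let y : QnSub F n := ⟨qBlock 0 Y, qBlock_mem 0 Y⟩
  have h := hφ x y ⟨_, superMul_mem x.2 y.2⟩ rfl
  rw [hφ.coe_apply_eq_superMul_left h2 ⟨_, _⟩, hφ.coe_apply_eq_superMul_left h2 x,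
    hφ.coe_apply_eq_superMul_left h2 y, hd] at h
  simp only [x, y, superMul_qBlock, qBlock_smul_one_superMul h2, qBlock_add, smul_qBlock,
    qBlock_inj] at h
  have hodd := h.2
  simp only [mul_zero, zero_mul, smul_zero, add_zero, zero_add] at hodd
  rw [smul_comm, smul_eq_zero] at hodd
  exact Ring.lie_def X Y ▸ hodd.resolve_left (one_div_ne_zero h2)

end IsHalfDerivation

end QnSub

/-- **1/2-derivations of the Jordan superalgebra `Q(n)⁺`.**
Let `F` be a field of characteristic not `2` and `n ≥ 2`.  Every
`1/2`-derivation `φ` of `Q(n)⁺` (the space of block matrices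
`[[A, B], [B, A]]` with the super-symmetrized product `∘`) is of the form
`φ x = α • x` for some `α ∈ F`.  (The `1/2`-derivation property is stated
via representatives: whenever `z ∈ Q(n)` equals `x ∘ y` as a matrix,
`φ z = (1/2) • (φ x ∘ y + x ∘ φ y)`.) -/
theorem half_derivation_of_Qn_plus
    {F : Type*} [Field F] (hchar : (2 : F) ≠ 0) (n : ℕ) (hn : 2 ≤ n)
    (φ : QnSub F n →ₗ[F] QnSub F n)
    (hφ : ∀ x y z : QnSub F n,
      (z : Matrix (Fin n ⊕ Fin n) (Fin n ⊕ Fin n) F)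
          = superMul (x : Matrix (Fin n ⊕ Fin n) (Fin n ⊕ Fin n) F) (y : Matrix (Fin n ⊕ Fin n) (Fin n ⊕ Fin n) F) →
      (φ z : Matrix (Fin n ⊕ Fin n) (Fin n ⊕ Fin n) F)
        = (1 / 2 : F) • (superMul (φ x : Matrix (Fin n ⊕ Fin n) (Fin n ⊕ Fin n) F)
              (y : Matrix (Fin n ⊕ Fin n) (Fin n ⊕ Fin n) F)
            + superMul (x : Matrix (Fin n ⊕ Fin n) (Fin n ⊕ Fin n) F)
              (φ y : Matrix (Fin n ⊕ Fin n) (Fin n ⊕ Fin n) F))) :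
    ∃ α : F, ∀ x : QnSub F n, φ x = α • x := by
  have hφ : QnSub.IsHalfDerivation φ := hφ
  have : Nontrivial (Fin n) := Fin.nontrivial_iff_two_le.mpr hn
  obtain ⟨A, B, hd⟩ := QnSub.exists_eq_qBlock (φ ⟨1, QnSub.one_mem⟩).2
  obtain ⟨β, rfl⟩ := hφ.odd_mem_range_scalar hchar hd
  obtain ⟨α, rfl⟩ := hφ.even_mem_range_scalar hchar hd
  simp only [scalar_apply, ← smul_one_eq_diagonal] at hd
  obtain rfl : β = 0 := eq_zero_of_forall_smul_lie_eq_zero (hφ.smul_lie_eq_zero hchar hd)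
  refine ⟨α, fun x => Subtype.ext ?_⟩
  obtain ⟨C, D, hx⟩ := QnSub.exists_eq_qBlock x.2
  rw [hφ.coe_apply_eq_superMul_left hchar, hd, Submodule.coe_smul, hx,
    qBlock_smul_one_superMul hchar, zero_smul, add_zero, smul_qBlock]
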